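/- For a strongly synchronizing subshift X with at least one synchronizing symbol, let 𝒞(X) be the set of admissible words of X that begin with a synchronizing symbol, contain no other synchronizing symbol, and can be followed by a synchronizing symbol; equip 𝒞(X) with the Markov structure where s(c) is the first symbol of c and t(c) is the set of synchronizing symbols that can follow c, with transition allowed from c to c' iff the first symbol of c' lies in t(c). Then X equals the Markov coded system scM(𝒞(X)): X is the closure of the set of points x ∈ Σ^ℤ admitting a bi-infinite sequence of cut indices i_k with x_{[i_k, i_{k+1})} ∈ 𝒞(X) and the first symbol of x_{[i_{k+1}, i_{k+2})} lying in t(x_{[i_k, i_{k+1})}) for all k. -/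

import Mathlib

/-- The shift on `Σ^ℤ`: `(x_i)_{i∈ℤ} ↦ (x_{i+1})_{i∈ℤ}`. -/
def shift {A : Type*} (x : ℤ → A) : ℤ → A := fun i => x (i + 1)

/-- The word `x_{[a,b]}` carried by the block of `x` on the interval `[a, b]`. -/
def block {A : Type*} (x : ℤ → A) (a b : ℤ) : List A :=
  (List.range (b + 1 - a).toNat).map fun k => x (a + k)

/-- A word is admissible for `X` if it appears in a point of `X`. -/
def Admissible {A : Type*} (X : Set (ℤ → A)) (w : List A) : Prop :=
  ∃ x ∈ X, ∃ n : ℤ, ∀ (k : ℕ) (h : k < w.length), x (n + k) = w.get ⟨k, h⟩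

/-- A word `v` is synchronizing for `X` if it is admissible and whenever `uv` and `vw`
are admissible, so is `uvw`. -/
def IsSyncWord {A : Type*} (X : Set (ℤ → A)) (v : List A) : Prop :=
  Admissible X v ∧ ∀ u w : List A, Admissible X (u ++ v) → Admissible X (v ++ w) →
    Admissible X (u ++ v ++ w)

/-- A subshift: a nonempty, closed, shift-invariant subset of `Σ^ℤ`. -/
def IsSubshift {A : Type*} [TopologicalSpace A] (X : Set (ℤ → A)) : Prop :=
  X.Nonempty ∧ IsClosed X ∧ shift '' X = X

/-- Topological transitivity of a subshift, expressed on its language: any two admissible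
words can be joined by an admissible transition word. -/
def LangTransitive {A : Type*} (X : Set (ℤ → A)) : Prop :=
  ∀ u v : List A, Admissible X u → Admissible X v → ∃ w, Admissible X (u ++ w ++ v)

/-- A synchronizing subshift: topologically transitive with a synchronizing word. -/
def SyncSubshift {A : Type*} (X : Set (ℤ → A)) : Prop :=
  LangTransitive X ∧ ∃ v : List A, IsSyncWord X v

/-- A strongly synchronizing subshift: synchronizing symbols appear uniformly close
(within distance `Q`) to synchronizing words. -/
def StronglySync {A : Type*} (X : Set (ℤ → A)) : Prop :=
  SyncSubshift X ∧ ∃ Q : ℕ, ∀ x ∈ X, ∀ I₁ I₂ : ℤ, I₁ ≤ I₂ →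
    IsSyncWord X (block x I₁ I₂) →
    ∃ i : ℤ, I₁ - Q ≤ i ∧ i ≤ I₂ + Q ∧ IsSyncWord X [x i]

/-- The higher block system `X^{⟨[a,b]⟩}` of `X`, over the alphabet of words. -/
def higherBlock {A : Type*} (X : Set (ℤ → A)) (a b : ℤ) : Set (ℤ → List A) :=
  { y | ∃ x ∈ X, ∀ i : ℤ, y i = block x (i + a) (i + b) }

/-- The Markov code `𝒞(X)`: admissible words beginning with a synchronizing symbol,
containing no other synchronizing symbol, which can be followed by a synchronizing
symbol. -/
def CodeC {A : Type*} (X : Set (ℤ → A)) : Set (List A) :=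
  { c | c ≠ [] ∧ Admissible X c ∧
        (∀ h : 0 < c.length, IsSyncWord X [c.get ⟨0, h⟩]) ∧
        (∀ (i : ℕ) (h : i < c.length), 0 < i → ¬ IsSyncWord X [c.get ⟨i, h⟩]) ∧
        (∃ σ : A, IsSyncWord X [σ] ∧ Admissible X (c ++ [σ])) }

/-- The points carrying bi-infinite admissible concatenations of words of `𝒞(X)`
respecting the Markov transition rule: consecutive words are separated at cut indices
`i k`, and the first symbol of each next word is a synchronizing symbol that can follow
the previous word. -/
def MarkovPoints {A : Type*} (X : Set (ℤ → A)) : Set (ℤ → A) :=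
  { x | ∃ i : ℤ → ℤ, StrictMono i ∧ (∀ m : ℤ, ∃ k, m < i k) ∧ (∀ m : ℤ, ∃ k, i k < m) ∧
      ∀ k : ℤ, block x (i k) (i (k + 1) - 1) ∈ CodeC X ∧
        IsSyncWord X [x (i (k + 1))] ∧
        Admissible X (block x (i k) (i (k + 1) - 1) ++ [x (i (k + 1))]) }

lemma block_eq {A : Type*} (x : ℤ → A) (a b : ℤ) :
    block x a b = (List.range (b + 1 - a).toNat).map (fun k : ℕ => x (a + (k:ℤ))) := by
  unfold block; simp
  rw [← List.map_eq_flatMap, List.map_map]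
  rfl

lemma block_length {A : Type*} (x : ℤ → A) (a b : ℤ) :
    (block x a b).length = (b + 1 - a).toNat := by
  rw [block_eq]; simp

lemma block_getElem {A : Type*} (x : ℤ → A) (a b : ℤ) (k : ℕ) (h : k < (block x a b).length) :
    (block x a b)[k] = x (a + k) := by
  simp only [block_eq] at h ⊢
  rw [List.getElem_map, List.getElem_range]

lemma block_get {A : Type*} (x : ℤ → A) (a b : ℤ) (k : ℕ) (h : k < (block x a b).length) :
    (block x a b).get ⟨k, h⟩ = x (a + k) := by
  rw [List.get_eq_getElem, block_getElem]

lemma block_nil {A : Type*} (x : ℤ → A) {a b : ℤ} (h : b < a) : block x a b = [] := by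
  have h0 : (b + 1 - a).toNat = 0 := by omega
  rw [block_eq, h0]; rfl

lemma block_singleton {A : Type*} (x : ℤ → A) (a : ℤ) : block x a a = [x a] := by
  have h0 : (a + 1 - a).toNat = 1 := by omega
  rw [block_eq, h0, show List.range 1 = [0] from rfl]
  simp

lemma block_append {A : Type*} (x : ℤ → A) {a b d : ℤ} (h1 : a ≤ b + 1) (h2 : b ≤ d) :
    block x a b ++ block x (b + 1) d = block x a d := by
  simp only [block_eq]
  have hn : (d + 1 - a).toNat = (b + 1 - a).toNat + (d + 1 - (b + 1)).toNat := by omega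
  rw [hn, List.range_add, List.map_append, List.map_map]
  congr 1
  apply List.map_congr_left
  intro k _
  simp only [Function.comp_apply]
  congr 1
  have h3 : ((b + 1 - a).toNat : ℤ) = b + 1 - a := by omega
  push_cast
  omega

lemma block_snoc {A : Type*} (x : ℤ → A) {a b : ℤ} (h : a ≤ b + 1) :
    block x a b ++ [x (b + 1)] = block x a (b + 1) := by
  rw [← block_singleton x (b + 1)]
  exact block_append x h (by omega)

lemma adm_nil {A : Type*} {X : Set (ℤ → A)} (hne : X.Nonempty) : Admissible X [] := by
  obtain ⟨x, hx⟩ := hne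
  exact ⟨x, hx, 0, fun k h => by simp at h⟩

lemma adm_block {A : Type*} {X : Set (ℤ → A)} {x : ℤ → A} (hx : x ∈ X) (a b : ℤ) :
    Admissible X (block x a b) :=
  ⟨x, hx, a, fun k h => (block_get x a b k h).symm⟩

lemma adm_middle {A : Type*} {X : Set (ℤ → A)} {u v w : List A}
    (h : Admissible X (u ++ v ++ w)) : Admissible X v := by
  obtain ⟨y, hy, n, hk⟩ := h
  refine ⟨y, hy, n + u.length, fun k hkv => ?_⟩
  have hlen : u.length + k < (u ++ v ++ w).length := by
    simp only [List.length_append]; omega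
  have e1 := hk (u.length + k) hlen
  have e2 : (u ++ v ++ w).get ⟨u.length + k, hlen⟩ = v.get ⟨k, hkv⟩ := by
    rw [List.get_eq_getElem, List.get_eq_getElem]
    rw [List.getElem_append_left (h' := hlen)
      (by simp only [List.length_append]; omega : u.length + k < (u ++ v).length)]
    rw [List.getElem_append_right (by omega : u.length ≤ u.length + k)]
    simp only [Nat.add_sub_cancel_left]
  have e3 : n + (u.length : ℤ) + k = n + ((u.length + k : ℕ) : ℤ) := by push_cast; ring
  rw [e3]
  exact e1.trans e2

lemma adm_prefix {A : Type*} {X : Set (ℤ → A)} {u v : List A}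
    (h : Admissible X (u ++ v)) : Admissible X u := by
  apply adm_middle (u := []) (w := v)
  simpa using h

lemma shiftZ_mem {A : Type*} {X : Set (ℤ → A)} (hsh : shift '' X = X) (t : ℤ) {x : ℤ → A}
    (hx : x ∈ X) : (fun j => x (j + t)) ∈ X := by
  have h1 : ∀ y ∈ X, (fun j : ℤ => y (j + 1)) ∈ X := by
    intro y hy
    have : shift y ∈ shift '' X := ⟨y, hy, rfl⟩
    rwa [hsh] at this
  have h2 : ∀ y ∈ X, (fun j : ℤ => y (j - 1)) ∈ X := by
    intro y hy
    rw [← hsh] at hy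
    obtain ⟨z, hz, hzy⟩ := hy
    have e : (fun j : ℤ => y (j - 1)) = z := by
      funext j; rw [← hzy]; show z (j - 1 + 1) = z j; congr 1; ring
    rw [e]; exact hz
  have key : ∀ n : ℕ, ∀ y ∈ X, ((fun j : ℤ => y (j + n)) ∈ X) ∧ ((fun j : ℤ => y (j - n)) ∈ X) := by
    intro n
    induction n with
    | zero => intro y hy; simpa using hy
    | succ m ih =>
      intro y hy
      constructor
      · have h' := h1 _ ((ih y hy).1)
        have e : (fun j : ℤ => y (j + (m + 1 : ℕ))) = fun j : ℤ => (fun i : ℤ => y (i + m)) (j + 1) := by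
          funext j; simp only []; congr 1; push_cast; ring
        rw [e]; exact h'
      · have h' := h2 _ ((ih y hy).2)
        have e : (fun j : ℤ => y (j - (m + 1 : ℕ))) = fun j : ℤ => (fun i : ℤ => y (i - m)) (j - 1) := by
          funext j; simp only []; congr 1; push_cast; ring
        rw [e]; exact h'
  rcases le_or_gt 0 t with ht | ht
  · have e : (fun j : ℤ => x (j + t)) = fun j : ℤ => x (j + (t.toNat : ℕ)) := by
      funext j; congr 1; omega
    rw [e]; exact (key t.toNat x hx).1
  · have e : (fun j : ℤ => x (j + t)) = fun j : ℤ => x (j - ((-t).toNat : ℕ)) := by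
      funext j; congr 1; omega
    rw [e]; exact (key (-t).toNat x hx).2

lemma mem_closure_approx {A : Type*} [TopologicalSpace A] {S : Set (ℤ → A)} {x : ℤ → A}
    (h : ∀ n : ℕ, ∃ y ∈ S, ∀ j : ℤ, |j| ≤ (n : ℤ) → y j = x j) : x ∈ closure S := by
  choose y hyS hyx using h
  have ht : Filter.Tendsto y Filter.atTop (nhds x) := by
    rw [tendsto_pi_nhds]
    intro j
    apply Filter.Tendsto.congr' _ (tendsto_const_nhds (x := x j) (f := Filter.atTop))
    filter_upwards [Filter.eventually_ge_atTop j.natAbs] with n hn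
    refine (hyx n j ?_).symm
    rw [Int.abs_eq_natAbs]; exact_mod_cast hn
  exact mem_closure_of_tendsto ht (Filter.Eventually.of_forall fun n => hyS n)

lemma mem_of_blocks {A : Type*} [TopologicalSpace A] {X : Set (ℤ → A)} (hcl : IsClosed X)
    (hsh : shift '' X = X) {x : ℤ → A}
    (h : ∀ n : ℕ, Admissible X (block x (-(n : ℤ)) (n : ℤ))) : x ∈ X := by
  have happ : ∀ n : ℕ, ∃ z ∈ X, ∀ j : ℤ, |j| ≤ (n : ℤ) → z j = x j := by
    intro n
    obtain ⟨y, hy, c, hk⟩ := h n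
    refine ⟨fun j => y (j + (c + n)), shiftZ_mem hsh _ hy, fun j hj => ?_⟩
    have hj' : -(n:ℤ) ≤ j ∧ j ≤ (n:ℤ) := abs_le.mp hj
    have hlen : (n + j).toNat < (block x (-(n : ℤ)) (n : ℤ)).length := by
      rw [block_length]; omega

    have hval := hk (n + j).toNat hlen
    rw [block_get] at hval
    have e1 : j + (c + n) = c + ((n + j).toNat : ℤ) := by omega
    have e2 : -(n : ℤ) + ((n + j).toNat : ℤ) = j := by omega
    show y (j + (c + n)) = x j
    rw [e1, hval, e2]
  have hx := mem_closure_approx happ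
  rwa [hcl.closure_eq] at hx

lemma block_snoc' {A : Type*} (x : ℤ → A) {a b : ℤ} (h : a ≤ b) :
    block x a (b - 1) ++ [x b] = block x a b := by
  have h2 := block_append x (a := a) (b := b - 1) (d := b) (by omega) (by omega)
  rw [show b - 1 + 1 = b from by ring] at h2
  rw [← h2, block_singleton]

lemma block_split {A : Type*} (x : ℤ → A) {a c b : ℤ} (h1 : a ≤ c) (h2 : c ≤ b + 1) :
    block x a (c - 1) ++ block x c b = block x a b := by
  have h := block_append x (a := a) (b := c - 1) (d := b) (by omega) (by omega)
  rwa [show c - 1 + 1 = c from by ring] at h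

lemma markov_subset {A : Type*} [TopologicalSpace A] {X : Set (ℤ → A)} (hne : X.Nonempty)
    (hcl : IsClosed X) (hsh : shift '' X = X) : MarkovPoints X ⊆ X := by
  intro x hx
  obtain ⟨i, hmono, hup, hdown, hcut⟩ := hx
  have hsync : ∀ k : ℤ, IsSyncWord X [x (i k)] := by
    intro k
    have h := (hcut (k - 1)).2.1
    rwa [show k - 1 + 1 = k from by ring] at h
  have hblockadm : ∀ k : ℤ, Admissible X (block x (i k) (i (k + 1))) := by
    intro k
    have h3 := (hcut k).2.2
    rwa [block_snoc' x (hmono (show k < k + 1 by omega)).le] at h3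
  have hadm : ∀ m : ℕ, ∀ k : ℤ, Admissible X (block x (i k) (i (k + m))) := by
    intro m
    induction m with
    | zero =>
      intro k
      rw [show k + ((0 : ℕ) : ℤ) = k from by simp, block_singleton]
      exact (hsync k).1
    | succ m ih =>
      intro k
      have hklt : i k ≤ i (k + m) := hmono.monotone (by omega)
      have hlt2 : i (k + m) ≤ i (k + m + 1) := (hmono (by omega)).le
      have hu : Admissible X (block x (i k) (i (k + m) - 1) ++ [x (i (k + m))]) := by
        rw [block_snoc' x hklt]; exact ih k
      have hv : Admissible X ([x (i (k + m))] ++ block x (i (k + m) + 1) (i (k + m + 1))) := by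
        rw [← block_singleton x (i (k + m)), block_append x (by omega) hlt2]
        exact hblockadm (k + m)
      have hglue := (hsync (k + m)).2 _ _ hu hv
      rw [block_snoc' x hklt, block_append x (by omega) hlt2] at hglue
      rwa [show k + ((m + 1 : ℕ) : ℤ) = k + m + 1 from by push_cast; ring]
  have hallb : ∀ a b : ℤ, Admissible X (block x a b) := by
    intro a b
    rcases lt_or_ge b a with hba | hab
    · rw [block_nil x hba]; exact adm_nil hne
    · obtain ⟨k₁, hk₁⟩ := hdown a
      obtain ⟨k₂, hk₂⟩ := hup b
      have hk12 : k₁ < k₂ := hmono.lt_iff_lt.mp (by omega)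
      have hbig : Admissible X (block x (i k₁) (i k₂)) := by
        have h := hadm (k₂ - k₁).toNat k₁
        rwa [show k₁ + (((k₂ - k₁).toNat : ℕ) : ℤ) = k₂ from by omega] at h
      have hik1a : i k₁ ≤ a := hk₁.le
      have hbik2 : b ≤ i k₂ := hk₂.le
      have h : Admissible X (block x (i k₁) (a - 1) ++ block x a b ++ block x (b + 1) (i k₂)) := by
        rw [List.append_assoc, block_append x (by omega) (by omega),
          block_split x (by omega) (by omega)]
        exact hbig
      exact adm_middle h
  exact mem_of_blocks hcl hsh fun n => hallb _ _

noncomputable def pget {A : Type*} (c : List A) (hc : 0 < c.length) (t : ℤ) : A :=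
  c.get ⟨(t % (c.length : ℤ)).toNat, by
    have h1 : 0 ≤ t % (c.length : ℤ) := Int.emod_nonneg t (by omega)
    have h2 : t % (c.length : ℤ) < (c.length : ℤ) := Int.emod_lt_of_pos t (by omega)
    omega⟩

lemma pget_mod {A : Type*} (c : List A) (hc : 0 < c.length) (s q : ℤ) :
    pget c hc (s + (c.length : ℤ) * q) = pget c hc s := by
  have h : (s + (c.length : ℤ) * q) % (c.length : ℤ) = s % (c.length : ℤ) :=
    Int.add_mul_emod_self_left _ _ _
  simp only [pget, h]

lemma pget_self_mod {A : Type*} (c : List A) (hc : 0 < c.length) (t : ℤ) :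
    pget c hc t = pget c hc (t % (c.length : ℤ)) := by
  conv_lhs => rw [← Int.emod_add_mul_ediv t (c.length : ℤ)]
  exact pget_mod c hc _ _

lemma pget_eq {A : Type*} (c : List A) (hc : 0 < c.length) {t : ℤ} (h0 : 0 ≤ t)
    (hL : t < (c.length : ℤ)) : pget c hc t = c.get ⟨t.toNat, by omega⟩ := by
  have h : t % (c.length : ℤ) = t := Int.emod_eq_of_lt h0 hL
  simp only [pget, h]

lemma dense_markov {A : Type*} [TopologicalSpace A] {X : Set (ℤ → A)}
    (htr : LangTransitive X) {x : ℤ → A} (hx : x ∈ X) {σ : A} (hσ : IsSyncWord X [σ]) :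
    x ∈ closure (MarkovPoints X) := by
  apply mem_closure_approx
  intro N
  have hwadm : Admissible X (block x (-(N : ℤ)) (N : ℤ)) := adm_block hx _ _
  obtain ⟨u₁, hu₁⟩ := htr [σ] _ hσ.1 hwadm
  obtain ⟨u₂, hu₂⟩ := htr ([σ] ++ u₁ ++ block x (-(N : ℤ)) (N : ℤ)) [σ] hu₁ hσ.1
  classical
  set w : List A := block x (-(N : ℤ)) (N : ℤ) with hwdef
  set c : List A := σ :: (u₁ ++ (w ++ u₂)) with hcdef
  have hcadm : Admissible X (c ++ [σ]) := by
    have e : c ++ [σ] = ([σ] ++ u₁ ++ w) ++ u₂ ++ [σ] := by simp [hcdef]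
    rw [e]; exact hu₂
  have hcpos : 0 < c.length := by rw [hcdef]; simp
  set L : ℤ := (c.length : ℤ) with hLdef
  have hL1 : 1 ≤ L := by omega
  have hwlen : w.length = 2 * N + 1 := by rw [hwdef, block_length]; omega
  have hclen : L = 1 + u₁.length + w.length + u₂.length := by
    rw [hLdef, hcdef]; simp; push_cast; ring
  set D : ℤ := (N : ℤ) + 1 + (u₁.length : ℤ) with hDdef
  set p : ℤ → A := fun j => pget c hcpos (j + D) with hpdef
  -- agreement with x on [-N, N]
  have hagree : ∀ j : ℤ, |j| ≤ (N : ℤ) → p j = x j := by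
    intro j hj
    have hj' : -(N : ℤ) ≤ j ∧ j ≤ (N : ℤ) := abs_le.mp hj
    have h0 : 0 ≤ j + D := by omega
    have h1 : j + D < L := by rw [hclen, hwlen]; push_cast; omega
    have e0 : p j = c.get ⟨(j + D).toNat, by omega⟩ := pget_eq c hcpos h0 h1
    rw [e0, List.get_eq_getElem]
    have hc2 : c = (σ :: u₁) ++ w ++ u₂ := by rw [hcdef]; simp
    rw [List.getElem_of_eq hc2]
    have hidx : (j + D).toNat < ((σ :: u₁) ++ w).length := by
      simp only [List.length_append, List.length_cons]; omega
    rw [List.getElem_append_left hidx]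
    have hidx2 : (σ :: u₁).length ≤ (j + D).toNat := by
      simp only [List.length_cons]; omega
    rw [List.getElem_append_right hidx2]
    have hidx3 : (j + D).toNat - (σ :: u₁).length = (j + N).toNat := by
      simp only [List.length_cons]; omega
    simp only [hidx3]
    have e5 : x (-(N : ℤ) + (((j + (N : ℤ)).toNat : ℕ) : ℤ)) = x j := by congr 1; omega
    exact (block_getElem x (-(N : ℤ)) (N : ℤ) ((j + (N : ℤ)).toNat)
      (by rw [block_length]; omega)).trans e5
  -- the finite set of synchronizing indices inside c
  set T : Finset ℕ :=
    (Finset.range c.length).filter (fun s => IsSyncWord X [pget c hcpos (s : ℤ)]) with hTdef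
  have hc0 : c.get ⟨0, hcpos⟩ = σ := rfl
  have h0T : 0 ∈ T := by
    rw [hTdef, Finset.mem_filter, Finset.mem_range]
    refine ⟨hcpos, ?_⟩
    rw [show (((0 : ℕ) : ℤ)) = 0 from rfl, pget_eq c hcpos le_rfl (by omega)]
    exact hσ
  set m : ℕ := T.card with hmdef
  have hm : 0 < m := Finset.card_pos.mpr ⟨0, h0T⟩
  set t : Fin m → ℕ := fun r => ((T.orderIsoOfFin hmdef.symm r) : ℕ) with htdef
  have tmono : StrictMono t := fun a b hab =>
    Subtype.coe_lt_coe.mpr ((T.orderIsoOfFin hmdef.symm).strictMono hab)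
  have tmem : ∀ r, t r ∈ T := fun r => (T.orderIsoOfFin hmdef.symm r).2
  have tlt : ∀ r, t r < c.length := by
    intro r
    have h := tmem r
    rw [hTdef, Finset.mem_filter, Finset.mem_range] at h
    exact h.1
  have tsync : ∀ r, IsSyncWord X [pget c hcpos ((t r : ℕ) : ℤ)] := by
    intro r
    have h := tmem r
    rw [hTdef, Finset.mem_filter] at h
    exact h.2
  have tsurj : ∀ s ∈ T, ∃ r, t r = s := by
    intro s hs
    exact ⟨(T.orderIsoOfFin hmdef.symm).symm ⟨s, hs⟩, by rw [htdef]; simp⟩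
  have t0 : t ⟨0, hm⟩ = 0 := by
    obtain ⟨r, hr⟩ := tsurj 0 h0T
    have h1 : t ⟨0, hm⟩ ≤ t r := tmono.monotone (by simp [Fin.le_def])
    omega
  -- characterization of sync positions of p
  have hsyncp : ∀ j : ℤ, IsSyncWord X [p j] ↔ ((j + D) % L).toNat ∈ T := by
    intro j
    have h0 : 0 ≤ (j + D) % L := Int.emod_nonneg _ (by omega)
    have h1 : (j + D) % L < L := Int.emod_lt_of_pos _ (by omega)
    have e : p j = pget c hcpos ((((j + D) % L).toNat : ℕ) : ℤ) := by
      rw [hpdef]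
      simp only []
      rw [pget_self_mod c hcpos (j + D), ← hLdef]
      congr 1
      omega
    rw [e, hTdef, Finset.mem_filter, Finset.mem_range]
    constructor
    · intro hs; exact ⟨by omega, hs⟩
    · exact And.right
  -- cut index function
  have hmpos : (0 : ℤ) < (m : ℤ) := by exact_mod_cast hm
  have hmodlt : ∀ k : ℤ, (k % (m : ℤ)).toNat < m := by
    intro k
    have h0 : 0 ≤ k % (m : ℤ) := Int.emod_nonneg _ (by omega)
    have h1 : k % (m : ℤ) < (m : ℤ) := Int.emod_lt_of_pos _ hmpos
    omega
  set i : ℤ → ℤ :=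
    fun k => (k / (m : ℤ)) * L - D + ((t ⟨(k % (m : ℤ)).toNat, hmodlt k⟩ : ℕ) : ℤ) with hidef
  have i_eq : ∀ (k q : ℤ) (r : ℕ) (hr : r < m), k / (m : ℤ) = q → k % (m : ℤ) = (r : ℤ) →
      i k = q * L - D + ((t ⟨r, hr⟩ : ℕ) : ℤ) := by
    intro k q r hr hq hrr
    rw [hidef]
    simp only []
    rw [hq]
    have e : (⟨(k % (m : ℤ)).toNat, hmodlt k⟩ : Fin m) = ⟨r, hr⟩ := Fin.ext (by simp; omega)
    rw [e]
  -- division data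
  have hdivdata : ∀ k : ℤ, ∃ (q : ℤ) (r : ℕ) (hr : r < m),
      i k = q * L - D + ((t ⟨r, hr⟩ : ℕ) : ℤ) ∧
      ((∃ hr1 : r + 1 < m, i (k + 1) = q * L - D + ((t ⟨r + 1, hr1⟩ : ℕ) : ℤ)) ∨
        (r + 1 = m ∧ i (k + 1) = (q + 1) * L - D)) := by
    intro k
    have hdm := Int.mul_ediv_add_emod k (m : ℤ)
    have hcast : k % (m : ℤ) = (((k % (m : ℤ)).toNat : ℕ) : ℤ) := by
      have h0 : 0 ≤ k % (m : ℤ) := Int.emod_nonneg _ (by omega)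
      omega
    refine ⟨k / (m : ℤ), (k % (m : ℤ)).toNat, hmodlt k, i_eq k _ _ _ rfl hcast, ?_⟩
    set r : ℕ := (k % (m : ℤ)).toNat with hrdef
    rcases lt_or_eq_of_le (show r + 1 ≤ m by have := hmodlt k; omega) with hlt | heq
    · left
      have hdiv : (k + 1) / (m : ℤ) = k / (m : ℤ) ∧ (k + 1) % (m : ℤ) = ((r : ℤ) + 1) := by
        apply (Int.ediv_emod_unique hmpos).mpr
        refine ⟨by linarith, by omega, by push_cast at *; omega⟩
      refine ⟨hlt, ?_⟩
      rw [i_eq (k + 1) (k / (m : ℤ)) (r + 1) hlt hdiv.1 (by push_cast; omega)]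
    · right
      refine ⟨heq, ?_⟩
      have hmul : (m : ℤ) * (k / (m : ℤ) + 1) = (m : ℤ) * (k / (m : ℤ)) + m := by ring
      have hdiv : (k + 1) / (m : ℤ) = k / (m : ℤ) + 1 ∧ (k + 1) % (m : ℤ) = 0 := by
        apply (Int.ediv_emod_unique hmpos).mpr
        refine ⟨by push_cast at *; linarith, le_rfl, hmpos⟩
      rw [i_eq (k + 1) (k / (m : ℤ) + 1) 0 hm hdiv.1 (by exact_mod_cast hdiv.2), t0]
      push_cast
      ring
  -- sync at every cut point
  have hik_sync : ∀ k : ℤ, IsSyncWord X [p (i k)] := by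
    intro k
    obtain ⟨q, r, hr, hik, -⟩ := hdivdata k
    rw [hsyncp]
    have htrlt : ((t ⟨r, hr⟩ : ℕ) : ℤ) < L := by
      have := tlt ⟨r, hr⟩; omega
    have e : (i k + D) % L = ((t ⟨r, hr⟩ : ℕ) : ℤ) := by
      have e2 : i k + D = ((t ⟨r, hr⟩ : ℕ) : ℤ) + L * q := by rw [hik]; ring
      rw [e2, Int.add_mul_emod_self_left, Int.emod_eq_of_lt (by omega) htrlt]
    rw [e]
    have e3 : (((t ⟨r, hr⟩ : ℕ) : ℤ)).toNat = t ⟨r, hr⟩ := by omega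
    rw [e3]
    exact tmem _
  -- key interval facts
  have hkey : ∀ k : ℤ, ∃ q : ℤ, q * L - D ≤ i k ∧ i k < i (k + 1) ∧ i (k + 1) ≤ (q + 1) * L - D ∧
      ∀ j : ℤ, i k < j → j < i (k + 1) → ¬ IsSyncWord X [p j] := by
    intro k
    obtain ⟨q, r, hr, hik, hcase⟩ := hdivdata k
    have hqL : (q + 1) * L = q * L + L := by ring
    have htrlt : ((t ⟨r, hr⟩ : ℕ) : ℤ) < L := by have := tlt ⟨r, hr⟩; omega
    have hnosync : ∀ s : ℤ, ((t ⟨r, hr⟩ : ℕ) : ℤ) < s → s < L →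
        (∀ hr1 : r + 1 < m, s < ((t ⟨r + 1, hr1⟩ : ℕ) : ℤ)) →
        ¬ IsSyncWord X [p (q * L - D + s)] := by
      intro s hs1 hs2 hs3 hsyn
      rw [hsyncp] at hsyn
      have e : (q * L - D + s + D) % L = s := by
        have e2 : q * L - D + s + D = s + L * q := by ring
        rw [e2, Int.add_mul_emod_self_left, Int.emod_eq_of_lt (by omega) hs2]
      rw [e] at hsyn
      obtain ⟨r', hr'⟩ := tsurj _ hsyn
      have hr'' : ((t r' : ℕ) : ℤ) = s := by omega
      have hgt : (⟨r, hr⟩ : Fin m) < r' := by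
        rw [← tmono.lt_iff_lt]
        omega
      rcases lt_or_eq_of_le (show r + 1 ≤ m by omega) with h1 | h1
      · have := hs3 h1
        have hlt2 : r' < (⟨r + 1, h1⟩ : Fin m) := by
          rw [← tmono.lt_iff_lt]
          omega
        rw [Fin.lt_def] at hgt hlt2
        simp at hgt hlt2
        omega
      · rw [Fin.lt_def] at hgt
        have := r'.isLt
        simp at hgt
        omega
    rcases hcase with ⟨hr1, hik1⟩ | ⟨hr1, hik1⟩
    · have ht2 : ((t ⟨r + 1, hr1⟩ : ℕ) : ℤ) < L := by have := tlt ⟨r + 1, hr1⟩; omega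
      have htlt : ((t ⟨r, hr⟩ : ℕ) : ℤ) < ((t ⟨r + 1, hr1⟩ : ℕ) : ℤ) := by
        have := tmono (show (⟨r, hr⟩ : Fin m) < ⟨r + 1, hr1⟩ by rw [Fin.lt_def]; simp)
        omega
      refine ⟨q, by omega, by omega, by omega, ?_⟩
      intro j hj1 hj2
      have e : j = q * L - D + (j - q * L + D) := by ring
      rw [e]
      exact hnosync _ (by omega) (by omega) (fun _ => by omega)
    · refine ⟨q, by omega, by omega, by omega, ?_⟩
      intro j hj1 hj2
      have e : j = q * L - D + (j - q * L + D) := by ring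
      rw [e]
      exact hnosync _ (by omega) (by omega) (fun h => by omega)
  -- the periodic pattern block
  have hpattern : ∀ q : ℤ, block p (q * L - D) ((q + 1) * L - D) = c ++ [σ] := by
    intro q
    have hqL : (q + 1) * L = q * L + L := by ring
    apply List.ext_getElem
    · rw [block_length]
      simp only [List.length_append, List.length_singleton]
      omega
    · intro n h1 h2
      rw [block_getElem]
      have hn : (n : ℤ) ≤ L := by
        rw [block_length] at h1
        omega
      rw [hpdef]
      simp only []
      have e : q * L - D + (n : ℤ) + D = (n : ℤ) + L * q := by ring
      rw [e, hLdef, pget_mod]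
      rcases lt_or_eq_of_le hn with hlt | heq
      · rw [pget_eq c hcpos (by omega) (by omega)]
        rw [List.get_eq_getElem]
        simp only [Int.toNat_natCast]
        rw [List.getElem_append_left (by omega)]
      · have e2 : (n : ℤ) = 0 + (c.length : ℤ) * 1 := by omega
        rw [e2, pget_mod, pget_eq c hcpos le_rfl (by omega)]
        rw [List.getElem_append_right (by omega), List.getElem_singleton]
        exact hc0
  -- admissibility of cut blocks
  have hadm_k : ∀ k : ℤ, Admissible X (block p (i k) (i (k + 1))) := by
    intro k
    obtain ⟨q, hq1, hlt, hq2, -⟩ := hkey k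
    have hqL : (q + 1) * L = q * L + L := by ring
    have hbig : Admissible X (block p (q * L - D) ((q + 1) * L - D)) := by
      rw [hpattern q]; exact hcadm
    have h : Admissible X (block p (q * L - D) (i k - 1) ++ block p (i k) (i (k + 1)) ++
        block p (i (k + 1) + 1) ((q + 1) * L - D)) := by
      rw [List.append_assoc, block_append p (by omega) (by omega),
        block_split p (by omega) (by omega)]
      exact hbig
    exact adm_middle h
  -- assemble
  refine ⟨p, ⟨i, ?_, ?_, ?_, ?_⟩, hagree⟩
  · apply strictMono_int_of_lt_succ
    intro k
    obtain ⟨q, -, hlt, -, -⟩ := hkey k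
    exact hlt
  · -- unbounded above
    intro M
    have hiq : ∀ q' : ℤ, i ((m : ℤ) * q') = q' * L - D := by
      intro q'
      rw [i_eq ((m : ℤ) * q') q' 0 hm (Int.mul_ediv_cancel_left _ (by omega))
        (by rw [Int.mul_emod_right]; rfl), t0]
      push_cast; ring
    refine ⟨(m : ℤ) * ((M.natAbs : ℤ) + (D.natAbs : ℤ) + 1), ?_⟩
    rw [hiq]
    have hq0 : (0 : ℤ) ≤ (M.natAbs : ℤ) + (D.natAbs : ℤ) + 1 := by positivity
    have := mul_le_mul_of_nonneg_left hL1 hq0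
    omega
  · -- unbounded below
    intro M
    have hiq : ∀ q' : ℤ, i ((m : ℤ) * q') = q' * L - D := by
      intro q'
      rw [i_eq ((m : ℤ) * q') q' 0 hm (Int.mul_ediv_cancel_left _ (by omega))
        (by rw [Int.mul_emod_right]; rfl), t0]
      push_cast; ring
    refine ⟨(m : ℤ) * (-((M.natAbs : ℤ) + (D.natAbs : ℤ) + 1)), ?_⟩
    rw [hiq]
    have hq0 : -((M.natAbs : ℤ) + (D.natAbs : ℤ) + 1) ≤ 0 := by omega
    have h2 : -((M.natAbs : ℤ) + (D.natAbs : ℤ) + 1) * L ≤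
        -((M.natAbs : ℤ) + (D.natAbs : ℤ) + 1) * 1 := by
      apply mul_le_mul_of_nonpos_left hL1 hq0
    omega
  · -- cut conditions
    intro k
    obtain ⟨q, hq1, hlt, hq2, hnos⟩ := hkey k
    have hsnoc : block p (i k) (i (k + 1) - 1) ++ [p (i (k + 1))] = block p (i k) (i (k + 1)) :=
      block_snoc' p hlt.le
    have hadm1 : Admissible X (block p (i k) (i (k + 1) - 1) ++ [p (i (k + 1))]) := by
      rw [hsnoc]; exact hadm_k k
    refine ⟨⟨?_, ?_, ?_, ?_, ?_⟩, hik_sync (k + 1), hadm1⟩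
    · have hlenpos : 0 < (block p (i k) (i (k + 1) - 1)).length := by
        rw [block_length]; omega
      exact List.ne_nil_of_length_pos hlenpos
    · exact adm_prefix hadm1
    · intro h
      rw [block_get]
      rw [show i k + ((0 : ℕ) : ℤ) = i k from by simp]
      exact hik_sync k
    · intro idx h hpos
      rw [block_get]
      apply hnos
      · omega
      · rw [block_length] at h
        omega
    · exact ⟨p (i (k + 1)), hik_sync (k + 1), hadm1⟩

/-- A strongly synchronizing subshift with a synchronizing symbol is the Markov coded
system of its Markov code `𝒞(X)`: `X = scM(𝒞(X))`. -/
theorem stmt19 {A : Type*} [Fintype A] [TopologicalSpace A] [DiscreteTopology A]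
    (X : Set (ℤ → A)) (hX : IsSubshift X) (hss : StronglySync X)
    (hσ : ∃ σ : A, IsSyncWord X [σ]) :
    X = closure (MarkovPoints X) := by
  obtain ⟨hne, hcl, hsh⟩ := hX
  obtain ⟨σ, hσs⟩ := hσ
  exact subset_antisymm (fun x hx => dense_markov hss.1.1 hx hσs)
    (closure_minimal (markov_subset hne hcl hsh) hcl)
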